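/- arXiv:2005.10139 — 3 statements merged into one kernel-verified Lean document; each statement's English description precedes it below -/
import Mathlib

section
/- If X = {g, g'} is a Green hyperwalk step of type (G3) in a Brauer configuration, then the polygons π(g) and π(g') are distinct truncated edges. -/
/-- A Brauer configuration: finite sets of vertices and germs, a partition of the
germs into polygons (recorded by the polygon map `pg`), a vertex map `vx`, a
successor permutation `succ` (the cyclic ordering of the germs around each vertex),
and a multiplicity function `mult`. -/
structure BrauerConfig where
  V : Type
  G : Type
  P : Type
  [fintypeV : Fintype V]
  [fintypeG : Fintype G]
  [fintypeP : Fintype P]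
  [decV : DecidableEq V]
  [decG : DecidableEq G]
  [decP : DecidableEq P]
  /-- the polygon containing a germ -/
  pg : G → P
  pg_surj : Function.Surjective pg
  /-- the vertex at which a germ sits -/
  vx : G → V
  /-- the successor permutation of the cyclic orderings around the vertices -/
  succ : Equiv.Perm G
  vx_succ : ∀ g, vx (succ g) = vx g
  /-- the multiplicity function -/
  mult : V → ℕ
  mult_pos : ∀ v, 0 < mult v
  /-- every polygon has at least two germs -/
  two_le_poly : ∀ p : P, 2 ≤ (Finset.univ.filter (fun g => pg g = p)).card
  /-- no polygon of size > 2 contains a germ at a truncated vertex -/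
  no_big_truncated : ∀ g : G,
    2 < (Finset.univ.filter (fun h => pg h = pg g)).card →
    ¬((Finset.univ.filter (fun h => vx h = vx g)).card = 1 ∧ mult (vx g) = 1)

namespace BrauerConfig

attribute [instance] fintypeV fintypeG fintypeP decV decG decP

variable (χ : BrauerConfig)

/-- The valency of a vertex. -/
def val (v : χ.V) : ℕ := (Finset.univ.filter (fun g => χ.vx g = v)).card

/-- The set of germs of a polygon. -/
def polyF (p : χ.P) : Finset χ.G := Finset.univ.filter (fun g => χ.pg g = p)

/-- The number of germs of a polygon. -/
def polyCard (p : χ.P) : ℕ := (χ.polyF p).card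

/-- A vertex is truncated if it has valency one and multiplicity one. -/
def TruncatedVx (v : χ.V) : Prop := χ.val v = 1 ∧ χ.mult v = 1

/-- A truncated edge: a polygon with exactly two germs, one of which sits at a
truncated vertex. -/
def TruncatedEdge (p : χ.P) : Prop :=
  χ.polyCard p = 2 ∧ ∃ g, χ.pg g = p ∧ χ.TruncatedVx (χ.vx g)

/-- Green hyperwalk step of type (G1): a singleton. -/
def IsG1 (X : Finset χ.G) : Prop := X.card = 1

/-- Green hyperwalk step of type (G2). -/
def IsG2 (X : Finset χ.G) : Prop :=
  X.card = 2 ∧ (∃ p : χ.P, X ⊂ χ.polyF p) ∧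
    ∀ g ∈ X, χ.mult (χ.vx g) = 1 ∧ χ.val (χ.vx g) = 2 ∧
      χ.TruncatedEdge (χ.pg (χ.succ g))

/-- Green hyperwalk step of type (G3). -/
def IsG3 (X : Finset χ.G) : Prop :=
  ∃ g g' : χ.G, X = {g, g'} ∧ χ.IsG2 ({χ.succ g, χ.succ g'} : Finset χ.G)

/-- A Green hyperwalk step: a nonempty proper subset of the germs satisfying
one of (G1), (G2), (G3). -/
def IsStep (X : Finset χ.G) : Prop :=
  X.Nonempty ∧ X ≠ Finset.univ ∧ (χ.IsG1 X ∨ χ.IsG2 X ∨ χ.IsG3 X)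

/-- One step of the Green hyperwalk recursion. -/
noncomputable def next (X : Finset χ.G) : Finset χ.G := by
  classical
  exact
    if χ.IsStep X then
      let Y : Finset χ.G :=
        if χ.IsG3 X then X.image χ.succ
        else ((X.biUnion (fun g => χ.polyF (χ.pg g))) \ X).image χ.succ
      if χ.IsStep Y then Y else ∅
    else ∅

/-- The Green hyperwalk starting at `X0`. -/
noncomputable def walk (X0 : Finset χ.G) (n : ℕ) : Finset χ.G := χ.next^[n] X0

/-- A Green hyperwalk terminates if it eventually becomes empty. -/
def Terminates (X0 : Finset χ.G) : Prop := ∃ k, χ.walk X0 k = ∅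

/-- A Green hyperwalk is periodic if it is (purely) periodic of some period `k > 0`. -/
def IsPeriodic (X0 : Finset χ.G) : Prop :=
  ∃ k, 0 < k ∧ ∀ i, χ.walk X0 (i + k) = χ.walk X0 i

end BrauerConfig

/-!
If `{σ g, σ g'}` is of type (G2), then `g` and `g'` sit at vertices of valency 2, where `σ` is
an involution; so `π g = π (σ (σ g))` is a truncated edge, and likewise `π g'`. If
`π g = π g'`, this two-germ polygon would be `{g, g'}`, yet one of its germs sits at a
vertex of valency 1.
-/

namespace BrauerConfig

variable {χ : BrauerConfig}

theorem succ_succ_eq_of_val_two {g : χ.G} (hv : χ.val (χ.vx g) = 2) :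
    χ.succ (χ.succ g) = g := by
  by_cases hfix : χ.succ g = g
  · rw [hfix, hfix]
  set F := Finset.univ.filter (fun h => χ.vx h = χ.vx g)
  have hF : F = {g, χ.succ g} :=
    (Finset.eq_of_subset_of_card_le
      (by simp [Finset.insert_subset_iff, F, χ.vx_succ])
      (by rw [Finset.card_pair (Ne.symm hfix)]; exact hv.le)).symm
  have hmem : χ.succ (χ.succ g) ∈ F := by simp [F, χ.vx_succ]
  rw [hF, Finset.mem_insert, Finset.mem_singleton] at hmem
  exact hmem.resolve_right fun h => hfix (χ.succ.injective h)

theorem isG2_pair_succ_of_isG3 {g g' : χ.G} (h : χ.IsG3 {g, g'}) :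
    χ.IsG2 {χ.succ g, χ.succ g'} := by
  obtain ⟨a, b, hab, hG2⟩ := h
  have himg := congrArg (Finset.image χ.succ) hab
  simp only [Finset.image_insert, Finset.image_singleton] at himg
  rwa [himg]

theorem ne_of_isG3 {g g' : χ.G} (h : χ.IsG3 {g, g'}) : g ≠ g' := by
  rintro rfl
  have hcard := (isG2_pair_succ_of_isG3 h).1
  simp at hcard

theorem val_eq_two_and_truncatedEdge_of_isG2 {X : Finset χ.G} (hX : χ.IsG2 X) {g : χ.G}
    (hg : χ.succ g ∈ X) : χ.val (χ.vx g) = 2 ∧ χ.TruncatedEdge (χ.pg g) := by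
  obtain ⟨-, hval, hedge⟩ := hX.2.2 _ hg
  rw [χ.vx_succ] at hval
  rw [succ_succ_eq_of_val_two hval] at hedge
  exact ⟨hval, hedge⟩

theorem TruncatedEdge.polyF_eq_pair {p : χ.P} (hp : χ.TruncatedEdge p) {g g' : χ.G}
    (hgg' : g ≠ g') (hg : χ.pg g = p) (hg' : χ.pg g' = p) : χ.polyF p = {g, g'} :=
  (Finset.eq_of_subset_of_card_le (by simp [Finset.insert_subset_iff, polyF, hg, hg'])
    (by rw [Finset.card_pair hgg']; exact hp.1.le)).symm

theorem TruncatedEdge.val_eq_one_of_pg_eq {p : χ.P} (hp : χ.TruncatedEdge p) {g g' : χ.G}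
    (hgg' : g ≠ g') (hg : χ.pg g = p) (hg' : χ.pg g' = p) :
    χ.val (χ.vx g) = 1 ∨ χ.val (χ.vx g') = 1 := by
  obtain ⟨k, hk, hkv, -⟩ := hp.2
  have hkmem : k ∈ χ.polyF p := by simp [polyF, hk]
  rw [hp.polyF_eq_pair hgg' hg hg', Finset.mem_insert, Finset.mem_singleton] at hkmem
  rcases hkmem with rfl | rfl
  · exact Or.inl hkv
  · exact Or.inr hkv

end BrauerConfig

open BrauerConfig in
theorem g3_step_polygons_distinct_truncated_edges_general (χ : BrauerConfig)
    (g g' : χ.G) (h : χ.IsG3 ({g, g'} : Finset χ.G)) :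
    χ.pg g ≠ χ.pg g' ∧ χ.TruncatedEdge (χ.pg g) ∧ χ.TruncatedEdge (χ.pg g') := by
  have hG2 := isG2_pair_succ_of_isG3 h
  obtain ⟨hval, hedge⟩ := val_eq_two_and_truncatedEdge_of_isG2 hG2 (g := g) (by simp)
  obtain ⟨hval', hedge'⟩ := val_eq_two_and_truncatedEdge_of_isG2 hG2 (g := g') (by simp)
  refine ⟨fun heq => ?_, hedge, hedge'⟩
  rcases hedge.val_eq_one_of_pg_eq (ne_of_isG3 h) rfl heq.symm with h1 | h1 <;> omega

open BrauerConfig in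
/-- If `X = {g, g'}` is a Green hyperwalk step of type (G3) in a Brauer
configuration, then the polygons `π g` and `π g'` are distinct truncated edges. -/
theorem g3_step_polygons_distinct_truncated_edges (χ : BrauerConfig)
    (g g' : χ.G) (h : χ.IsG3 ({g, g'} : Finset χ.G)) (hgg' : g ≠ g') :
    χ.pg g ≠ χ.pg g' ∧ χ.TruncatedEdge (χ.pg g) ∧ χ.TruncatedEdge (χ.pg g') :=
  g3_step_polygons_distinct_truncated_edges_general χ g g' h
end

section
/- If (X_j) is a non-terminating Green hyperwalk in a Brauer configuration χ, then every germ g appearing in any step X_i belongs to a polygon of size at most 4. -/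
/-!
Every step has at most two germs, and while the walk continues so does the set `Y_i` from
which `X_{i+1}` is taken. If `X_i` is of type (G3), each of its germs `g` has `σ g` at a
vertex of valency two, where `σ` is an involution, so the polygon of `g = σ (σ g)` is a
truncated edge. Otherwise `Y_i` is the image under `σ` of the germs outside `X_i` of the
polygons meeting `X_i`, so such a polygon has at most `|Y_i| + |X_i| ≤ 4` germs.
-/

namespace BrauerConfig

variable {χ : BrauerConfig}

/-- The set `x \ X` of the recursion, for `X` inside the polygon `x`. -/
def polyComplement (X : Finset χ.G) : Finset χ.G :=
  (X.biUnion fun g => χ.polyF (χ.pg g)) \ X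

/-- The set `Y` of the recursion. -/
noncomputable def nextCandidate (X : Finset χ.G) : Finset χ.G := by
  classical
  exact if χ.IsG3 X then X.image χ.succ else (polyComplement X).image χ.succ

lemma isStep_and_isStep_nextCandidate_of_next_ne_empty {X : Finset χ.G} (h : χ.next X ≠ ∅) :
    χ.IsStep X ∧ χ.IsStep (nextCandidate X) := by
  classical
  unfold next at h
  unfold nextCandidate polyComplement
  dsimp only at h
  split_ifs at h ⊢ <;> first | exact ⟨‹_›, ‹_›⟩ | exact absurd rfl h

lemma walk_succ (X0 : Finset χ.G) (i : ℕ) : χ.walk X0 (i + 1) = χ.next (χ.walk X0 i) :=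
  Function.iterate_succ_apply' _ _ _

lemma IsStep.card_le_two {X : Finset χ.G} (h : χ.IsStep X) : X.card ≤ 2 := by
  obtain ⟨-, -, h1 | h2 | ⟨g, g', rfl, -⟩⟩ := h
  · exact h1.le.trans one_le_two
  · exact h2.1.le
  · exact Finset.card_le_two

lemma succ_succ_of_val_eq_two {a : χ.G} (hv : χ.val (χ.vx a) = 2) :
    χ.succ (χ.succ a) = a := by
  by_contra hne
  have h1 : χ.succ a ≠ a := fun h => hne (by rw [h, h])
  have h2 : χ.succ (χ.succ a) ≠ χ.succ a := fun h => h1 (χ.succ.injective h)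
  have hsub : ({a, χ.succ a, χ.succ (χ.succ a)} : Finset χ.G) ⊆
      Finset.univ.filter (fun h => χ.vx h = χ.vx a) := by
    intro x hx
    simp only [Finset.mem_insert, Finset.mem_singleton] at hx
    rcases hx with rfl | rfl | rfl <;> simp [χ.vx_succ]
  have hcard := Finset.card_le_card hsub
  rw [Finset.card_eq_three.mpr ⟨_, _, _, h1.symm, Ne.symm hne, h2.symm, rfl⟩] at hcard
  unfold val at hv
  omega

lemma IsG3.polyCard_eq_two {X : Finset χ.G} (hX : χ.IsG3 X) {g : χ.G} (hg : g ∈ X) :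
    χ.polyCard (χ.pg g) = 2 := by
  obtain ⟨g₀, g₁, rfl, -, -, hG2⟩ := hX
  have hmem : χ.succ g ∈ ({χ.succ g₀, χ.succ g₁} : Finset χ.G) := by
    simp only [Finset.mem_insert, Finset.mem_singleton] at hg ⊢
    rcases hg with rfl | rfl <;> simp
  obtain ⟨-, hval, hedge⟩ := hG2 _ hmem
  rw [χ.vx_succ] at hval
  rw [succ_succ_of_val_eq_two hval] at hedge
  exact hedge.1

lemma polyCard_le_card_polyComplement_add_card {X : Finset χ.G} {g : χ.G} (hg : g ∈ X) :
    χ.polyCard (χ.pg g) ≤ (polyComplement X).card + X.card := by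
  have hsub : χ.polyF (χ.pg g) ⊆ polyComplement X ∪ X := by
    intro x hx
    by_cases hxX : x ∈ X
    · exact Finset.mem_union_right _ hxX
    · exact Finset.mem_union_left _
        (Finset.mem_sdiff.mpr ⟨Finset.mem_biUnion.mpr ⟨g, hg, hx⟩, hxX⟩)
  exact (Finset.card_le_card hsub).trans (Finset.card_union_le _ _)

end BrauerConfig

open BrauerConfig in
theorem nonterminating_walk_polygons_le_four_general (χ : BrauerConfig)
    (X0 : Finset χ.G)
    (hnt : ∀ i, χ.walk X0 i ≠ ∅) :
    ∀ i, ∀ g ∈ χ.walk X0 i, χ.polyCard (χ.pg g) ≤ 4 := by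
  intro i g hg
  obtain ⟨hX, hY⟩ :=
    isStep_and_isStep_nextCandidate_of_next_ne_empty (walk_succ X0 i ▸ hnt (i + 1))
  by_cases hG3 : χ.IsG3 (χ.walk X0 i)
  · exact (hG3.polyCard_eq_two hg).trans_le (by norm_num)
  · calc χ.polyCard (χ.pg g)
        ≤ (polyComplement (χ.walk X0 i)).card + (χ.walk X0 i).card :=
          polyCard_le_card_polyComplement_add_card hg
      _ = (nextCandidate (χ.walk X0 i)).card + (χ.walk X0 i).card := by
          rw [nextCandidate, if_neg hG3, Finset.card_image_of_injective _ χ.succ.injective]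
      _ ≤ 2 + 2 := add_le_add hY.card_le_two hX.card_le_two

open BrauerConfig in
/-- If `(X_j)` is a non-terminating Green hyperwalk in a Brauer configuration `χ`,
then every germ appearing in any step `X_i` belongs to a polygon of size at
most 4. -/
theorem nonterminating_walk_polygons_le_four (χ : BrauerConfig)
    (X0 : Finset χ.G) (hX0 : χ.IsStep X0)
    (hnt : ∀ i, χ.walk X0 i ≠ ∅) :
    ∀ i, ∀ g ∈ χ.walk X0 i, χ.polyCard (χ.pg g) ≤ 4 :=
  nonterminating_walk_polygons_le_four_general χ X0 hnt
end

section
/- Let A = KQ/I be an algebra with strings defined as for special multiserial algebras, let w ∈ S_A be a string, and suppose (w_+, w_-) and (z_+, z_-) are two admissible pairs for (w, w) such that w = w_+ w_2 w_- with w_+ = w_-⁻¹ and w = z_+ z_2 z_- with z_+ = z_-⁻¹ (i.e. both pairs have no outer substrings). Then (w_+, w_-) = (z_+, z_-). In other words, the set of admissible pairs of this 'palindromic factorization' type has at most one element. -/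
/-- The combinatorial data of a special multiserial algebra `A = KQ/I`:
a finite quiver together with a set of zero relations; strings are walks in the
quiver avoiding the relations, their inverses, and backtracking. -/
structure SMData where
  /-- vertices of the quiver -/
  V : Type
  /-- arrows of the quiver -/
  E : Type
  [fintypeV : Fintype V]
  [fintypeE : Fintype E]
  [decE : DecidableEq E]
  [decV : DecidableEq V]
  /-- source of an arrow -/
  s : E → V
  /-- target of an arrow -/
  t : E → V
  /-- the zero relations generating the ideal `I` -/
  Z : Set (List E)
  Z_paths : ∀ p ∈ Z, 2 ≤ p.length ∧ p.Chain' (fun α β => t α = s β)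
  /-- (SM1): for every arrow `β` there is at most one arrow `γ` with `βγ ∉ I`,
  and at most one arrow `α` with `αβ ∉ I` -/
  special_left : ∀ β γ γ' : E, t β = s γ → t β = s γ' →
    [β, γ] ∉ Z → [β, γ'] ∉ Z → γ = γ'
  special_right : ∀ β α α' : E, t α = s β → t α' = s β →
    [α, β] ∉ Z → [α', β] ∉ Z → α = α'

namespace SMData

attribute [instance] fintypeV fintypeE decE decV

variable (D : SMData)

/-- Symbols: arrows `(e, true)` and their formal inverses `(e, false)`. -/
abbrev Sym := D.E × Bool

/-- Source of a symbol. -/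
def src : D.Sym → D.V
  | (e, true) => D.s e
  | (e, false) => D.t e

/-- Target of a symbol. -/
def tgt : D.Sym → D.V
  | (e, true) => D.t e
  | (e, false) => D.s e

/-- Formal inverse of a word. -/
def invWord (w : List D.Sym) : List D.Sym :=
  (w.map (fun a => (a.1, !a.2))).reverse

/-- A word is a string if its symbols are consecutively composable with no
backtracking, and no direct (or inverse) subword is a relation. -/
def IsString (w : List D.Sym) : Prop :=
  w.Chain' (fun a b => D.tgt a = D.src b ∧ ¬(b.1 = a.1 ∧ b.2 = !a.2)) ∧
  ∀ p ∈ D.Z,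
    ¬ (p.map (fun e => ((e, true) : D.Sym))).IsInfix w ∧
    ¬ (D.invWord (p.map (fun e => ((e, true) : D.Sym)))).IsInfix w

end SMData

namespace SMData

variable {D : SMData}

theorem invWord_append (u v : List D.Sym) :
    D.invWord (u ++ v) = D.invWord v ++ D.invWord u := by
  simp [invWord]

theorem invWord_invWord (u : List D.Sym) : D.invWord (D.invWord u) = u := by
  simp [invWord, List.map_reverse, Function.comp_def]

/-- If `zp` were longer, write `zp = wp ++ x :: r`: the letter `x` opens `w2 ++ wm`, so it is
direct, while `zm = invWord zp` makes `x⁻¹` close `wp ++ w2`, so `x` is inverse. -/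
theorem length_le_of_palindromic {w wp w2 wm zp z2 zm : List D.Sym}
    (hw : w = wp ++ w2 ++ wm) (hz : w = zp ++ z2 ++ zm)
    (hwinv : wp = D.invWord wm) (hzinv : zp = D.invWord zm)
    (hwfac : w2 ++ wm = [] ∨ ∃ b, (w2 ++ wm).head? = some b ∧ b.2 = true)
    (hwim : wp ++ w2 = [] ∨ ∃ a, (wp ++ w2).getLast? = some a ∧ a.2 = true) :
    zp.length ≤ wp.length := by
  by_contra! hlt
  obtain ⟨x, r, hzp⟩ : ∃ x r, zp = wp ++ x :: r := by
    have hwp : wp <+: w := ⟨w2 ++ wm, by rw [hw, List.append_assoc]⟩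
    have hzp : zp <+: w := ⟨z2 ++ zm, by rw [hz, List.append_assoc]⟩
    obtain ⟨_ | ⟨x, r⟩, h⟩ := List.prefix_of_prefix_length_le hwp hzp hlt.le
    · simp [← h] at hlt
    · exact ⟨x, r, h.symm⟩
  have hx_direct : x.2 = true := by
    have h : w2 ++ wm = x :: (r ++ z2 ++ zm) :=
      List.append_cancel_left (by rw [← List.append_assoc, ← hw, hz, hzp]; simp)
    rcases hwfac with hnil | ⟨b, hb, hbt⟩
    · simp [h] at hnil
    · rw [h, List.head?_cons, Option.some.injEq] at hb
      exact hb ▸ hbt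
  have hx_inverse : x.2 = false := by
    have hzm : zm = D.invWord r ++ (x.1, !x.2) :: wm := by
      rw [← invWord_invWord zm, ← hzinv, hzp, hwinv, invWord_append, invWord_invWord]
      simp [invWord]
    have h : wp ++ w2 = zp ++ z2 ++ D.invWord r ++ [(x.1, !x.2)] :=
      List.append_cancel_right (by rw [← hw, hz, hzm]; simp)
    rcases hwim with hnil | ⟨a, ha, hat⟩
    · simp [h] at hnil
    · rw [h, List.getLast?_append_of_ne_nil _ (List.cons_ne_nil _ _)] at ha
      simp only [List.getLast?_singleton, Option.some.injEq] at ha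
      simpa [← ha] using hat
  simp [hx_direct] at hx_inverse

end SMData

open SMData in
theorem palindromic_admissible_pair_unique_general (D : SMData)
    (w wp w2 wm zp z2 zm : List D.Sym)
    (hw : w = wp ++ w2 ++ wm) (hz : w = zp ++ z2 ++ zm)
    (hwinv : wp = D.invWord wm) (hzinv : zp = D.invWord zm)
    -- `w₊` is a factor substring: it is followed by a direct letter (or is all of `w`)
    (hwfac : w2 ++ wm = [] ∨ ∃ b, (w2 ++ wm).head? = some b ∧ b.2 = true)
    -- `w₋` is an image substring: it is preceded by a direct letter (or is all of `w`)
    (hwim : wp ++ w2 = [] ∨ ∃ a, (wp ++ w2).getLast? = some a ∧ a.2 = true)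
    (hzfac : z2 ++ zm = [] ∨ ∃ b, (z2 ++ zm).head? = some b ∧ b.2 = true)
    (hzim : zp ++ z2 = [] ∨ ∃ a, (zp ++ z2).getLast? = some a ∧ a.2 = true) :
    wp = zp ∧ wm = zm ∧ w2 = z2 := by
  have hlen : wp.length = zp.length :=
    le_antisymm (length_le_of_palindromic hz hw hzinv hwinv hzfac hzim)
      (length_le_of_palindromic hw hz hwinv hzinv hwfac hwim)
  have hp : wp = zp := by
    have hwp : wp <+: w := ⟨w2 ++ wm, by rw [hw, List.append_assoc]⟩
    have hzp : zp <+: w := ⟨z2 ++ zm, by rw [hz, List.append_assoc]⟩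
    exact (List.prefix_of_prefix_length_le hwp hzp hlen.le).eq_of_length hlen
  have hm : wm = zm := by
    rw [← invWord_invWord wm, ← invWord_invWord zm, ← hwinv, ← hzinv, hp]
  have hmid : zp ++ w2 ++ zm = zp ++ z2 ++ zm := by rw [← hz, hw, hp, hm]
  exact ⟨hp, hm, by simpa using hmid⟩

open SMData in
/-- Let `A = KQ/I` with strings defined as for special multiserial algebras, let
`w` be a string, and suppose `(w₊, w₋)` and `(z₊, z₋)` are admissible pairs for
`(w, w)` of palindromic factorization type: `w = w₊ w₂ w₋` with `w₊ = w₋⁻¹` and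
`w = z₊ z₂ z₋` with `z₊ = z₋⁻¹` (no outer substrings). Then
`(w₊, w₋) = (z₊, z₋)`: this type of admissible pair is unique. -/
theorem palindromic_admissible_pair_unique (D : SMData)
    (w wp w2 wm zp z2 zm : List D.Sym)
    (hstr : D.IsString w)
    (hw : w = wp ++ w2 ++ wm) (hz : w = zp ++ z2 ++ zm)
    (hwinv : wp = D.invWord wm) (hzinv : zp = D.invWord zm)
    -- `w₊` is a factor substring: it is followed by a direct letter (or is all of `w`)
    (hwfac : w2 ++ wm = [] ∨ ∃ b, (w2 ++ wm).head? = some b ∧ b.2 = true)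
    -- `w₋` is an image substring: it is preceded by a direct letter (or is all of `w`)
    (hwim : wp ++ w2 = [] ∨ ∃ a, (wp ++ w2).getLast? = some a ∧ a.2 = true)
    (hzfac : z2 ++ zm = [] ∨ ∃ b, (z2 ++ zm).head? = some b ∧ b.2 = true)
    (hzim : zp ++ z2 = [] ∨ ∃ a, (zp ++ z2).getLast? = some a ∧ a.2 = true) :
    wp = zp ∧ wm = zm ∧ w2 = z2 :=
  palindromic_admissible_pair_unique_general D w wp w2 wm zp z2 zm hw hz hwinv hzinv hwfac hwim
    hzfac hzim
end
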